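/- For every integer n ≥ 2, the family of n×n matrices {(1/(2ab)) · NESW(a×b) : a,b ≥ 1, a+b ≤ n} is affinely independent, and the hollow symmetric Monge polytope HM_n equals the convex hull of this family; consequently HM_n is a simplex with n(n−1)/2 vertices. -/

import Mathlib

open Finset

/-- The Monge property for an `n × n` real matrix (indices are 0-based). -/
def IsMonge {n : ℕ} (C : Matrix (Fin n) (Fin n) ℝ) : Prop :=
  ∀ i I j J : Fin n, i < I → j < J → C i j + C I J ≤ C i J + C I j

/-- The hollow symmetric Monge polytope: symmetric matrices with zero diagonal,
nonnegative entries summing to 1, and the Monge property. -/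
def HM (n : ℕ) : Set (Matrix (Fin n) (Fin n) ℝ) :=
  {C | C.IsSymm ∧ (∀ i, C i i = 0) ∧ (∀ i j, 0 ≤ C i j) ∧
    (∑ i, ∑ j, C i j) = 1 ∧ IsMonge C}

/-- `NESW n a b` is the `n × n` 0/1 matrix whose (1-based) `(k, l)` entry is 1 iff
`(k ≤ a ∧ l > n - b) ∨ (k > n - b ∧ l ≤ a)`. -/
def NESW (n a b : ℕ) : Matrix (Fin n) (Fin n) ℝ :=
  Matrix.of fun k l =>
    if (k.val + 1 ≤ a ∧ n - b < l.val + 1) ∨ (n - b < k.val + 1 ∧ l.val + 1 ≤ a) then 1 else 0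

/-- The index set of pairs `(a, b)` with `a, b ≥ 1` and `a + b ≤ n`. -/
def idx (n : ℕ) : Finset (ℕ × ℕ) :=
  (Finset.range (n + 1) ×ˢ Finset.range (n + 1)).filter
    fun ab => 1 ≤ ab.1 ∧ 1 ≤ ab.2 ∧ ab.1 + ab.2 ≤ n

/-- The candidate vertices of the hollow symmetric Monge polytope. -/
noncomputable def hmVertex (n : ℕ) (ab : {ab : ℕ × ℕ // ab ∈ idx n}) :
    Matrix (Fin n) (Fin n) ℝ :=
  (1 / (2 * (ab.val.1 : ℝ) * (ab.val.2 : ℝ))) • NESW n ab.val.1 ab.val.2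

/-! Write `NESW(a×b) = M + Mᵀ`, where `M` is the outer product of the indicator of the first `a`
indices with the indicator of the last `b`. An outer product of an antitone and a monotone vector
is Monge, so the scaled matrices `NESW(a×b) / (2ab)` lie in `HM_n`. Conversely, let `U` be the
strict upper triangle of `C`, extended by zero. The mixed second difference of `U` at rows
`a - 1, a` and columns `n - b - 1, n - b`, multiplied by `2ab`, is a linear form on matrices that is
`1` at the vertex indexed by `(a, b)` and `0` at the others, is nonnegative on `HM_n` by the Monge
property, and, by two-dimensional telescoping of `U`, recovers every symmetric hollow matrix as the
combination of the vertices with these coefficients. These forms are thus barycentric coordinates,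
which gives affine independence and the convex-hull description at once.
-/

open Matrix

section Monge

variable {n : ℕ} {C D : Matrix (Fin n) (Fin n) ℝ}

theorem IsMonge.add (hC : IsMonge C) (hD : IsMonge D) : IsMonge (C + D) := by
  intro i I j J hi hj
  simp only [Matrix.add_apply]
  linarith [hC i I j J hi hj, hD i I j J hi hj]

theorem IsMonge.smul {c : ℝ} (hc : 0 ≤ c) (hC : IsMonge C) : IsMonge (c • C) := by
  intro i I j J hi hj
  simp only [Matrix.smul_apply, smul_eq_mul]
  nlinarith [hC i I j J hi hj]

theorem IsMonge.transpose (hC : IsMonge C) : IsMonge Cᵀ := by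
  intro i I j J hi hj
  simp only [transpose_apply]
  linarith [hC j J i I hj hi]

theorem isMonge_vecMulVec {u v : Fin n → ℝ} (hu : Antitone u) (hv : Monotone v) :
    IsMonge (vecMulVec u v) := by
  intro i I j J hi hj
  simp only [vecMulVec_apply]
  nlinarith [mul_nonneg (sub_nonneg.2 (hu hi.le)) (sub_nonneg.2 (hv hj.le))]

end Monge

theorem convex_HM (n : ℕ) : Convex ℝ (HM n) := by
  rintro C ⟨hCs, hCd, hCn, hC1, hCm⟩ D ⟨hDs, hDd, hDn, hD1, hDm⟩ s t hs ht hst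
  refine ⟨(hCs.smul s).add (hDs.smul t), fun i => ?_, fun i j => ?_, ?_,
    (hCm.smul hs).add (hDm.smul ht)⟩
  · simp [hCd i, hDd i]
  · simp only [Matrix.add_apply, Matrix.smul_apply, smul_eq_mul]
    have := hCn i j; have := hDn i j
    positivity
  · simp only [Matrix.add_apply, Matrix.smul_apply, smul_eq_mul, sum_add_distrib, ← mul_sum, hC1,
      hD1, hst, mul_one]

theorem mem_idx {n a b : ℕ} : (a, b) ∈ idx n ↔ 1 ≤ a ∧ 1 ≤ b ∧ a + b ≤ n := by
  simp only [idx, mem_filter, mem_product, mem_range]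
  omega

theorem card_idx (n : ℕ) : #(idx n) = n * (n - 1) / 2 := by
  have fiber : ∀ a ∈ range (n + 1),
      #{b ∈ range (n + 1) | 1 ≤ a ∧ 1 ≤ b ∧ a + b ≤ n} = if a = 0 then 0 else n - a := by
    intro a _
    split_ifs with ha
    · simp [ha]
    · rw [show {b ∈ range (n + 1) | 1 ≤ a ∧ 1 ≤ b ∧ a + b ≤ n} = Icc 1 (n - a) by
        ext b; simp only [mem_filter, mem_range, mem_Icc]; omega]
      simp only [Nat.card_Icc]
      omega
  rw [idx, card_filter, sum_product]
  simp only [← card_filter]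
  rw [sum_congr rfl fiber, sum_range_succ', ← sum_range_id, ← sum_range_reflect]
  simp only [Nat.add_one_ne_zero, if_false, if_true, add_zero]
  exact sum_congr rfl fun x hx => by rw [mem_range] at hx; omega

noncomputable def prefixIndicator (n a : ℕ) (k : Fin n) : ℝ := if k.val < a then 1 else 0

noncomputable def suffixIndicator (n b : ℕ) (k : Fin n) : ℝ := if n - b ≤ k.val then 1 else 0

section Indicators

variable {n : ℕ}

theorem prefixIndicator_nonneg (a : ℕ) (k : Fin n) : 0 ≤ prefixIndicator n a k := by
  unfold prefixIndicator; split_ifs <;> norm_num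

theorem suffixIndicator_nonneg (b : ℕ) (k : Fin n) : 0 ≤ suffixIndicator n b k := by
  unfold suffixIndicator; split_ifs <;> norm_num

theorem antitone_prefixIndicator (a : ℕ) : Antitone (prefixIndicator n a) := by
  intro k l hkl
  have : k.val ≤ l.val := hkl
  unfold prefixIndicator; split_ifs <;> first | omega | norm_num

theorem monotone_suffixIndicator (b : ℕ) : Monotone (suffixIndicator n b) := by
  intro k l hkl
  have : k.val ≤ l.val := hkl
  unfold suffixIndicator; split_ifs <;> first | omega | norm_num

theorem sum_prefixIndicator {a : ℕ} (ha : a ≤ n) : ∑ k, prefixIndicator n a k = a := by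
  simp only [prefixIndicator, sum_boole, Fin.card_filter_val_lt, min_eq_right ha]

theorem sum_suffixIndicator {b : ℕ} (hb : b ≤ n) : ∑ k, suffixIndicator n b k = b := by
  have h := card_filter_add_card_filter_not (s := univ) (fun k : Fin n => k.val < n - b)
  simp only [Fin.card_filter_val_lt, not_lt, card_univ, Fintype.card_fin] at h
  simp only [suffixIndicator, sum_boole]
  exact_mod_cast (by omega)

end Indicators

theorem NESW_eq_add_transpose {n a b : ℕ} (hab : a + b ≤ n) :
    NESW n a b = vecMulVec (prefixIndicator n a) (suffixIndicator n b) +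
      (vecMulVec (prefixIndicator n a) (suffixIndicator n b))ᵀ := by
  ext k l
  simp only [NESW, of_apply, Matrix.add_apply, transpose_apply, vecMulVec_apply, prefixIndicator,
    suffixIndicator]
  split_ifs <;> first | (exfalso; omega) | norm_num

theorem sum_sum_vecMulVec {n : ℕ} (u v : Fin n → ℝ) :
    ∑ i, ∑ j, vecMulVec u v i j = (∑ i, u i) * ∑ j, v j := by
  simp only [vecMulVec_apply, ← mul_sum, ← sum_mul]

theorem hmVertex_mem_HM {n : ℕ} (ab : idx n) : hmVertex n ab ∈ HM n := by
  obtain ⟨⟨a, b⟩, hab⟩ := ab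
  obtain ⟨ha, hb, hsum⟩ := mem_idx.mp hab
  simp only [hmVertex, NESW_eq_add_transpose hsum]
  set M := vecMulVec (prefixIndicator n a) (suffixIndicator n b)
  have hdiag : ∀ i, M i i = 0 := fun i => by
    simp only [M, vecMulVec_apply, prefixIndicator, suffixIndicator]
    split_ifs <;> first | (exfalso; omega) | norm_num
  have hnonneg : ∀ i j, 0 ≤ M i j := fun i j =>
    mul_nonneg (prefixIndicator_nonneg a i) (suffixIndicator_nonneg b j)
  have hMonge : IsMonge M :=
    isMonge_vecMulVec (antitone_prefixIndicator a) (monotone_suffixIndicator b)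
  have hM : ∑ i, ∑ j, M i j = a * b := by
    rw [sum_sum_vecMulVec, sum_prefixIndicator (by omega), sum_suffixIndicator (by omega)]
  refine ⟨(isSymm_add_transpose_self M).smul _, fun i => ?_, fun i j => ?_, ?_,
    (hMonge.add hMonge.transpose).smul (by positivity)⟩
  · simp only [Matrix.smul_apply, Matrix.add_apply, transpose_apply, hdiag, add_zero, smul_zero]
  · simp only [Matrix.smul_apply, Matrix.add_apply, transpose_apply, smul_eq_mul]
    have := hnonneg i j; have := hnonneg j i
    positivity
  · simp only [Matrix.smul_apply, Matrix.add_apply, transpose_apply, smul_eq_mul, ← mul_sum,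
      sum_add_distrib]
    rw [sum_comm (f := fun i j => M j i), hM]
    field_simp
    ring

noncomputable def upperPart {n : ℕ} (C : Matrix (Fin n) (Fin n) ℝ) (i j : ℕ) : ℝ :=
  if h : i < j ∧ j < n then C ⟨i, h.1.trans h.2⟩ ⟨j, h.2⟩ else 0

def mixedDiff (G : ℕ → ℕ → ℝ) (p q : ℕ) : ℝ :=
  G p (q + 1) - G p q - G (p + 1) (q + 1) + G (p + 1) q

theorem sum_Ico_sum_range_mixedDiff (G : ℕ → ℕ → ℝ) {i m : ℕ} (him : i ≤ m) (l : ℕ) :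
    ∑ p ∈ Ico i m, ∑ q ∈ range l, mixedDiff G p q = G i l - G i 0 - G m l + G m 0 := by
  have inner : ∀ p, ∑ q ∈ range l, mixedDiff G p q =
      (G (p + 1) 0 - G (p + 1) l) - (G p 0 - G p l) := fun p => by
    rw [sum_congr rfl fun q _ => show mixedDiff G p q =
      (G p (q + 1) - G p q) - (G (p + 1) (q + 1) - G (p + 1) q) by unfold mixedDiff; ring,
      sum_sub_distrib, sum_range_sub, sum_range_sub]
    ring
  simp only [inner, sum_Ico_sub (fun p => G p 0 - G p l) him]
  ring

section UpperPart

variable {n : ℕ} (C : Matrix (Fin n) (Fin n) ℝ)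

theorem upperPart_eq_zero_of_le {i j : ℕ} (h : j ≤ i) : upperPart C i j = 0 :=
  dif_neg fun h' => by omega

theorem upperPart_add (D : Matrix (Fin n) (Fin n) ℝ) (i j : ℕ) :
    upperPart (C + D) i j = upperPart C i j + upperPart D i j := by
  unfold upperPart; split_ifs <;> simp

theorem upperPart_smul (c : ℝ) (i j : ℕ) : upperPart (c • C) i j = c * upperPart C i j := by
  unfold upperPart; split_ifs <;> simp

theorem upperPart_of_lt {i j : ℕ} (h : i < j) (hj : j < n) :
    upperPart C i j = C ⟨i, h.trans hj⟩ ⟨j, hj⟩ :=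
  dif_pos ⟨h, hj⟩

theorem upperPart_of_le (hdiag : ∀ i, C i i = 0) {i j : ℕ} (h : i ≤ j) (hj : j < n) :
    upperPart C i j = C ⟨i, h.trans_lt hj⟩ ⟨j, hj⟩ := by
  rcases h.eq_or_lt with rfl | h
  · rw [upperPart_eq_zero_of_le C le_rfl, hdiag]
  · exact upperPart_of_lt C h hj

theorem upperPart_add_upperPart_swap (hsymm : C.IsSymm) (hdiag : ∀ i, C i i = 0) (i j : Fin n) :
    upperPart C i j + upperPart C j i = C i j := by
  rcases lt_trichotomy i j with h | rfl | h
  · rw [upperPart_of_lt C h j.isLt, upperPart_eq_zero_of_le C (Fin.le_def.mp h.le), add_zero]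
  · rw [upperPart_eq_zero_of_le C le_rfl, hdiag, add_zero]
  · rw [upperPart_of_lt C h i.isLt, upperPart_eq_zero_of_le C (Fin.le_def.mp h.le), zero_add,
      hsymm.apply]

theorem upperPart_NESW {a b : ℕ} (hab : a + b ≤ n) (p q : ℕ) :
    upperPart (NESW n a b) p q = if p < a ∧ n - b ≤ q ∧ q < n then 1 else 0 := by
  simp only [upperPart, NESW, of_apply]
  split_ifs <;> first | (exfalso; omega) | rfl

theorem mixedDiff_upperPart_nonneg (hC : C ∈ HM n) {p q : ℕ} (hpq : p ≤ q) (hq : q + 1 < n) :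
    0 ≤ mixedDiff (upperPart C) p q := by
  obtain ⟨-, hdiag, hnonneg, -, hMonge⟩ := hC
  rcases hpq.eq_or_lt with rfl | h
  · rw [mixedDiff, upperPart_of_lt C (Nat.lt_succ_self p) hq, upperPart_eq_zero_of_le C le_rfl,
      upperPart_eq_zero_of_le C le_rfl, upperPart_eq_zero_of_le C (Nat.le_succ p)]
    linarith [hnonneg ⟨p, by omega⟩ ⟨p + 1, hq⟩]
  · rw [mixedDiff, upperPart_of_le C hdiag (by omega) hq, upperPart_of_le C hdiag h.le (by omega),
      upperPart_of_le C hdiag (by omega) hq, upperPart_of_le C hdiag h (by omega)]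
    linarith [hMonge ⟨p, by omega⟩ ⟨p + 1, by omega⟩ ⟨q, by omega⟩ ⟨q + 1, hq⟩
      (Fin.mk_lt_mk.mpr p.lt_succ_self) (Fin.mk_lt_mk.mpr q.lt_succ_self)]


theorem mixedDiff_upperPart_eq_zero_of_lt {p q : ℕ} (h : q < p) :
    mixedDiff (upperPart C) p q = 0 := by
  simp only [mixedDiff, upperPart_eq_zero_of_le C (by omega : q + 1 ≤ p),
    upperPart_eq_zero_of_le C h.le, upperPart_eq_zero_of_le C (by omega : q + 1 ≤ p + 1),
    upperPart_eq_zero_of_le C (by omega : q ≤ p + 1)]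
  ring

end UpperPart

theorem sum_idx_ite_eq_sum_product {n : ℕ} (f : ℕ → ℕ → ℝ) (hf : ∀ p q, q < p → f p q = 0)
    (i : ℕ) {j : ℕ} (hj : j < n) :
    ∑ ab ∈ idx n, (if i < ab.1 ∧ n - ab.2 ≤ j then f (ab.1 - 1) (n - ab.2 - 1) else 0) =
      ∑ pq ∈ Ico i n ×ˢ range j, f pq.1 pq.2 := by
  refine sum_bij_ne_zero (fun ab _ _ => (ab.1 - 1, n - ab.2 - 1)) ?_ ?_ ?_ ?_
  · rintro ⟨a, b⟩ hab hne
    obtain ⟨ha, hb, hsum⟩ := mem_idx.mp hab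
    have hcond : i < a ∧ n - b ≤ j := by by_contra h; exact hne (if_neg h)
    simp only [mem_product, mem_Ico, mem_range]
    omega
  · rintro ⟨a, b⟩ hab _ ⟨a', b'⟩ hab' _ h
    obtain ⟨ha, hb, hsum⟩ := mem_idx.mp hab
    obtain ⟨ha', hb', hsum'⟩ := mem_idx.mp hab'
    simp only [Prod.mk.injEq] at h ⊢
    omega
  · rintro ⟨p, q⟩ hpq hne
    simp only [mem_product, mem_Ico, mem_range] at hpq
    have hpq' : p ≤ q := by by_contra h; exact hne (hf p q (by omega))
    refine ⟨(p + 1, n - 1 - q), mem_idx.mpr (by omega), ?_, ?_⟩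
    · rw [if_pos (by omega)]
      convert hne using 2 <;> omega
    · simp only [Prod.mk.injEq]
      omega
  · rintro ⟨a, b⟩ _ hne
    exact if_pos (by by_contra h; exact hne (if_neg h))

theorem sum_mixedDiff_upperPart_mul {n : ℕ} (C : Matrix (Fin n) (Fin n) ℝ) (i j : Fin n) :
    ∑ ab ∈ idx n, mixedDiff (upperPart C) (ab.1 - 1) (n - ab.2 - 1) *
      (prefixIndicator n ab.1 i * suffixIndicator n ab.2 j) = upperPart C i j := by
  have corner : ∀ ab : ℕ × ℕ, mixedDiff (upperPart C) (ab.1 - 1) (n - ab.2 - 1) *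
      (prefixIndicator n ab.1 i * suffixIndicator n ab.2 j) =
      if i < ab.1 ∧ n - ab.2 ≤ j then mixedDiff (upperPart C) (ab.1 - 1) (n - ab.2 - 1) else 0 :=
    fun ab => by simp only [prefixIndicator, suffixIndicator, ite_and]; split_ifs <;> simp
  rw [sum_congr rfl fun ab _ => corner ab,
    sum_idx_ite_eq_sum_product _ (fun _ _ => mixedDiff_upperPart_eq_zero_of_lt C) i j.isLt,
    sum_product, sum_Ico_sum_range_mixedDiff _ i.isLt.le,
    upperPart_eq_zero_of_le C (Nat.zero_le _), upperPart_eq_zero_of_le C j.isLt.le,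
    upperPart_eq_zero_of_le C (Nat.zero_le n)]
  ring


theorem mixedDiff_upperPart_NESW {n a b a' b' : ℕ} (hab : (a, b) ∈ idx n)
    (hab' : (a', b') ∈ idx n) :
    mixedDiff (upperPart (NESW n a' b')) (a - 1) (n - b - 1) =
      if (a, b) = (a', b') then 1 else 0 := by
  obtain ⟨ha, hb, hsum⟩ := mem_idx.mp hab
  obtain ⟨ha', hb', hsum'⟩ := mem_idx.mp hab'
  simp only [mixedDiff, upperPart_NESW hsum', Prod.mk.injEq]
  split_ifs <;> first | (exfalso; omega) | norm_num

/-- Indexing by `(a, b)` puts the top-left cell of the difference at `(a - 1, n - b)`, the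
bottom-left cell of the north-east block of `NESW(a×b)`. -/
noncomputable def hmCoord (n : ℕ) (ab : ℕ × ℕ) : Module.Dual ℝ (Matrix (Fin n) (Fin n) ℝ) where
  toFun C := 2 * ab.1 * ab.2 * mixedDiff (upperPart C) (ab.1 - 1) (n - ab.2 - 1)
  map_add' C D := by simp only [mixedDiff, upperPart_add]; ring
  map_smul' c C := by simp only [mixedDiff, upperPart_smul, RingHom.id_apply, smul_eq_mul]; ring

section Coordinates

variable {n : ℕ}

theorem hmCoord_apply (ab : ℕ × ℕ) (C : Matrix (Fin n) (Fin n) ℝ) :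
    hmCoord n ab C = 2 * ab.1 * ab.2 * mixedDiff (upperPart C) (ab.1 - 1) (n - ab.2 - 1) :=
  rfl

theorem hmCoord_hmVertex (ab ab' : idx n) :
    hmCoord n ab (hmVertex n ab') = if ab = ab' then 1 else 0 := by
  obtain ⟨⟨a, b⟩, hab⟩ := ab
  obtain ⟨⟨a', b'⟩, hab'⟩ := ab'
  obtain ⟨ha, hb, -⟩ := mem_idx.mp hab
  rw [hmVertex, map_smul, hmCoord_apply, mixedDiff_upperPart_NESW hab hab', smul_eq_mul]
  simp only [Subtype.mk.injEq]
  split_ifs with h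
  · obtain ⟨rfl, rfl⟩ := Prod.mk.inj h
    field_simp
  · simp

theorem linearIndependent_hmVertex (n : ℕ) : LinearIndependent ℝ (hmVertex n) :=
  .of_pairwise_dual_eq_zero_one _ (fun ab => hmCoord n ab)
    (fun _ _ h => (hmCoord_hmVertex _ _).trans (if_neg h))
    (fun _ => (hmCoord_hmVertex _ _).trans (if_pos rfl))

theorem hmCoord_nonneg {C : Matrix (Fin n) (Fin n) ℝ} (hC : C ∈ HM n) {ab : ℕ × ℕ}
    (hab : ab ∈ idx n) : 0 ≤ hmCoord n ab C := by
  obtain ⟨a, b⟩ := ab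
  obtain ⟨ha, hb, hsum⟩ := mem_idx.mp hab
  have := mixedDiff_upperPart_nonneg C hC (p := a - 1) (q := n - b - 1) (by omega) (by omega)
  rw [hmCoord_apply]
  positivity

theorem sum_hmCoord_smul_hmVertex {C : Matrix (Fin n) (Fin n) ℝ} (hsymm : C.IsSymm)
    (hdiag : ∀ i, C i i = 0) : ∑ ab : idx n, hmCoord n ab C • hmVertex n ab = C := by
  have term : ∀ ab : idx n, hmCoord n ab C • hmVertex n ab =
      mixedDiff (upperPart C) (ab.1.1 - 1) (n - ab.1.2 - 1) •
        (vecMulVec (prefixIndicator n ab.1.1) (suffixIndicator n ab.1.2) +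
          (vecMulVec (prefixIndicator n ab.1.1) (suffixIndicator n ab.1.2))ᵀ) := by
    rintro ⟨⟨a, b⟩, hab⟩
    obtain ⟨ha, hb, hsum⟩ := mem_idx.mp hab
    rw [hmVertex, hmCoord_apply, smul_smul, NESW_eq_add_transpose hsum]
    congr 1
    field_simp
  ext i j
  simp only [Matrix.sum_apply, term, Matrix.smul_apply, Matrix.add_apply, transpose_apply,
    vecMulVec_apply, smul_eq_mul, mul_add, sum_add_distrib]
  rw [sum_coe_sort (idx n) fun ab => mixedDiff (upperPart C) (ab.1 - 1) (n - ab.2 - 1) *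
      (prefixIndicator n ab.1 i * suffixIndicator n ab.2 j),
    sum_coe_sort (idx n) fun ab => mixedDiff (upperPart C) (ab.1 - 1) (n - ab.2 - 1) *
      (prefixIndicator n ab.1 j * suffixIndicator n ab.2 i),
    sum_mixedDiff_upperPart_mul, sum_mixedDiff_upperPart_mul,
    upperPart_add_upperPart_swap C hsymm hdiag]

end Coordinates

theorem sum_hmCoord_eq_one {n : ℕ} {C : Matrix (Fin n) (Fin n) ℝ} (hC : C ∈ HM n) :
    ∑ ab : idx n, hmCoord n ab C = 1 := by
  obtain ⟨hsymm, hdiag, -, hsum, -⟩ := hC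
  have hvertex : ∀ ab, ∑ i, ∑ j, hmVertex n ab i j = 1 := fun ab => (hmVertex_mem_HM ab).2.2.2.1
  calc ∑ ab : idx n, hmCoord n ab C
        = ∑ ab : idx n, hmCoord n ab C * ∑ i, ∑ j, hmVertex n ab i j := by
        simp only [hvertex, mul_one]
    _ = ∑ i, ∑ j, (∑ ab : idx n, hmCoord n ab C • hmVertex n ab) i j := by
        simp only [Matrix.sum_apply, Matrix.smul_apply, smul_eq_mul, mul_sum]
        rw [sum_comm]
        exact sum_congr rfl fun _ _ => sum_comm
    _ = 1 := by rw [sum_hmCoord_smul_hmVertex hsymm hdiag, hsum]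

theorem HM_eq_convexHull (n : ℕ) : HM n = convexHull ℝ (Set.range (hmVertex n)) := by
  refine subset_antisymm (fun C hC => ?_) (convexHull_min ?_ (convex_HM n))
  · rw [← sum_hmCoord_smul_hmVertex hC.1 hC.2.1]
    exact (convex_convexHull ℝ _).sum_mem (fun ab _ => hmCoord_nonneg hC ab.2)
      (sum_hmCoord_eq_one hC) (fun ab _ => subset_convexHull ℝ _ ⟨ab, rfl⟩)
  · rintro _ ⟨ab, rfl⟩
    exact hmVertex_mem_HM ab

theorem hm_simplex_general (n : ℕ) :
    AffineIndependent ℝ (hmVertex n) ∧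
    HM n = convexHull ℝ (Set.range (hmVertex n)) ∧
    Function.Injective (hmVertex n) ∧
    (idx n).card = n * (n - 1) / 2 :=
  ⟨(linearIndependent_hmVertex n).affineIndependent, HM_eq_convexHull n,
    (linearIndependent_hmVertex n).injective, card_idx n⟩

/-- The family `(1/(2ab)) • NESW (a × b)` (for `a, b ≥ 1`, `a + b ≤ n`) is affinely
independent, and the hollow symmetric Monge polytope is its convex hull; it is a simplex
with `n(n-1)/2` vertices. -/
theorem hm_simplex (n : ℕ) (hn : 2 ≤ n) :
    AffineIndependent ℝ (hmVertex n) ∧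
    HM n = convexHull ℝ (Set.range (hmVertex n)) ∧
    Function.Injective (hmVertex n) ∧
    (idx n).card = n * (n - 1) / 2 :=
  hm_simplex_general n
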